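/- arXiv:1506.04588 — 2 statements merged into one kernel-verified Lean document; each statement's English description precedes it below -/
import Mathlib

section
/- Let $0 < a_i \le b_i$ for $i = 1,\dots,n$, let $w \in \mathbb{R}^n$, and let $Y = \{y \in \mathbb{R}^n \mid \|y\|_0 \le K, \; y_i \in \{0\} \cup [a_i, b_i] \text{ for all } i\}$. Then $\min_{y \in Y} \sum_{i=1}^n (y_i - w_i)^2 = \sum_{i=1}^n w_i^2 + \min\{\sum_{i=1}^n (r_i - w_i^2) z_i \mid e^T z \le K, z \in \{0,1\}^n\}$, where $r_i = \min_{y_i \in [a_i, b_i]}(y_i - w_i)^2$. -/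
open Finset

theorem stmt4 (n K : ℕ) (hK1 : 1 ≤ K) (hKn : K ≤ n)
    (a b w r : Fin n → ℝ) (hab : ∀ i, 0 < a i ∧ a i ≤ b i)
    (hr : ∀ i, IsLeast ((fun t => (t - w i) ^ 2) '' Set.Icc (a i) (b i)) (r i))
    (m : ℝ)
    (hm : IsLeast {s : ℝ | ∃ z : Fin n → ℝ, (∀ i, z i = 0 ∨ z i = 1) ∧
        ∑ i, z i ≤ (K : ℝ) ∧ s = ∑ i, (r i - (w i) ^ 2) * z i} m) :
    IsLeast {s : ℝ | ∃ y : Fin n → ℝ,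
        ((Finset.univ.filter fun i => y i ≠ 0).card ≤ K ∧
          ∀ i, y i = 0 ∨ y i ∈ Set.Icc (a i) (b i)) ∧
        s = ∑ i, (y i - w i) ^ 2}
      (∑ i, (w i) ^ 2 + m) := by
  choose t ht heq using fun i => (hr i).1
  obtain ⟨⟨z, hz01, hzK, hmval⟩, hmlb⟩ := hm
  constructor
  · -- membership
    refine ⟨fun i => t i * z i, ⟨?_, ?_⟩, ?_⟩
    · have hsub : (Finset.univ.filter fun i => t i * z i ≠ 0) ⊆
          (Finset.univ.filter fun i => z i = 1) := by
        intro i hi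
        simp only [mem_filter, mem_univ, true_and] at hi ⊢
        rcases hz01 i with h | h
        · exact absurd (by rw [h, mul_zero]) hi
        · exact h
      have hcard : ((Finset.univ.filter fun i => z i = 1).card : ℝ) ≤ (K : ℝ) := by
        calc ((Finset.univ.filter fun i => z i = 1).card : ℝ)
            = ∑ i, z i := by
              rw [Finset.card_filter]
              push_cast
              refine Finset.sum_congr rfl fun i _ => ?_
              rcases hz01 i with h | h <;> simp [h]
          _ ≤ (K : ℝ) := hzK
      have := (Finset.card_le_card hsub).trans (Nat.cast_le.mp hcard)
      exact this
    · intro i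
      rcases hz01 i with h | h
      · left; simp [h]
      · right; simpa [h] using ht i
    · rw [hmval, ← Finset.sum_add_distrib]
      refine Finset.sum_congr rfl fun i _ => ?_
      rcases hz01 i with h | h
      · simp [h]
      · have h2 : (t i - w i) ^ 2 = r i := heq i
        simp only [h, mul_one]
        rw [← h2]; ring
  · -- lower bound
    rintro s ⟨y, ⟨hcard, hyab⟩, rfl⟩
    set z : Fin n → ℝ := fun i => if y i = 0 then 0 else 1 with hzdef
    have hz01 : ∀ i, z i = 0 ∨ z i = 1 := by
      intro i; by_cases h : y i = 0 <;> simp [hzdef, h]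
    have hsum : ∑ i, z i = ((Finset.univ.filter fun i => y i ≠ 0).card : ℝ) := by
      rw [Finset.card_filter]
      push_cast
      refine Finset.sum_congr rfl fun i _ => ?_
      by_cases h : y i = 0 <;> simp [hzdef, h]
    have hzK : ∑ i, z i ≤ (K : ℝ) := by
      rw [hsum]; exact_mod_cast hcard
    have hmle : m ≤ ∑ i, (r i - (w i) ^ 2) * z i := hmlb ⟨z, hz01, hzK, rfl⟩
    have key : ∀ i, (w i) ^ 2 + (r i - (w i) ^ 2) * z i ≤ (y i - w i) ^ 2 := by
      intro i
      by_cases h : y i = 0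
      · simp [hzdef, h]
      · have hy : y i ∈ Set.Icc (a i) (b i) := (hyab i).resolve_left h
        have : r i ≤ (y i - w i) ^ 2 := (hr i).2 ⟨y i, hy, rfl⟩
        simp [hzdef, h]
        linarith
    calc ∑ i, (w i) ^ 2 + m ≤ ∑ i, (w i) ^ 2 + ∑ i, (r i - (w i) ^ 2) * z i := by
          linarith
      _ = ∑ i, ((w i) ^ 2 + (r i - (w i) ^ 2) * z i) := (Finset.sum_add_distrib).symm
      _ ≤ ∑ i, (y i - w i) ^ 2 := Finset.sum_le_sum fun i _ => key i
end

section
/- Let $0 < a_i \le b_i$ for $i=1,\dots,n$, $w \in \mathbb{R}^n$, $1 \le K \le n$, and $Y = \{y \in \mathbb{R}^n \mid \|y\|_0 \le K, y_i \in \{0\} \cup [a_i,b_i]\}$. Define $r_i = \min_{t \in [a_i,b_i]}(t-w_i)^2$, $v_i = r_i - w_i^2$, and let $\bar{z} \in \{0,1\}^n$ be any minimizer of $v^T z$ over $\{z \in \{0,1\}^n : e^T z \le K\}$ satisfying $\bar z_i = 1 \Rightarrow v_i \le 0$. Then $\bar{y}$ with $\bar{y}_i = \bar{z}_i \cdot \min\{b_i,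 \max\{w_i, a_i\}\}$ is a minimizer of $\sum_{i=1}^n (y_i - w_i)^2$ over $Y$. -/
/-!
The clamp `min b (max w a)` of `w` to `[a, b]` attains `r = min_{t ∈ [a,b]} (t - w)²`. Hence for
a point `y` of `Y` with support indicator `z`, coordinatewise `(y i - w i)² ≥ w i² + v i z i`, with
equality for `ȳ`, `z̄`. Summing, the cost of `y` is at least `∑ w i² + vᵀz ≥ ∑ w i² + vᵀz̄`, which is
the cost of `ȳ`; and `ȳ ∈ Y` because its support lies in that of `z̄`.
-/

open Finset

lemma min_max_mem_Icc {a b : ℝ} (hab : a ≤ b) (w : ℝ) : min b (max w a) ∈ Set.Icc a b :=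
  ⟨le_min hab (le_max_right _ _), min_le_left _ _⟩

lemma sq_sub_min_max_le {a b w t : ℝ} (ht : t ∈ Set.Icc a b) :
    (min b (max w a) - w) ^ 2 ≤ (t - w) ^ 2 := by
  obtain ⟨hat, htb⟩ := ht
  rcases le_total w a with hwa | haw
  · rw [max_eq_right hwa, min_eq_right (hat.trans htb)]
    nlinarith
  rcases le_total b w with hbw | hwb
  · rw [max_eq_left haw, min_eq_left hbw]
    nlinarith
  · rw [max_eq_left haw, min_eq_right hwb, sub_self]
    simpa using sq_nonneg (t - w)

lemma isLeast_sq_sub_min_max {a b : ℝ} (hab : a ≤ b) (w : ℝ) :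
    IsLeast ((fun t => (t - w) ^ 2) '' Set.Icc a b) ((min b (max w a) - w) ^ 2) :=
  ⟨⟨_, min_max_mem_Icc hab w, rfl⟩, by rintro _ ⟨t, ht, rfl⟩; exact sq_sub_min_max_le ht⟩

lemma sq_mul_sub_eq_of_zero_or_one {z c w : ℝ} (hz : z = 0 ∨ z = 1) :
    (z * c - w) ^ 2 = w ^ 2 + ((c - w) ^ 2 - w ^ 2) * z := by
  rcases hz with rfl | rfl <;> ring

lemma sq_add_mul_support_le {a b w r y : ℝ}
    (hr : r ∈ lowerBounds ((fun t => (t - w) ^ 2) '' Set.Icc a b))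
    (hy : y = 0 ∨ y ∈ Set.Icc a b) :
    w ^ 2 + (r - w ^ 2) * (if y ≠ 0 then 1 else 0) ≤ (y - w) ^ 2 := by
  by_cases hy0 : y = 0
  · simp [hy0]
  · have : r ≤ (y - w) ^ 2 := hr ⟨y, hy.resolve_left hy0, rfl⟩
    simp only [hy0, ne_eq, not_false_eq_true, if_true, mul_one]
    linarith

lemma natCast_card_filter_ne_zero_eq_sum {ι : Type*} [Fintype ι] {z : ι → ℝ}
    (hz : ∀ i, z i = 0 ∨ z i = 1) : (#{i | z i ≠ 0} : ℝ) = ∑ i, z i := by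
  rw [natCast_card_filter]
  refine sum_congr rfl fun i _ => ?_
  rcases hz i with h | h <;> simp [h]

theorem stmt5_general (n K : ℕ)
    (a b w r : Fin n → ℝ) (hab : ∀ i, 0 < a i ∧ a i ≤ b i)
    (hr : ∀ i, IsLeast ((fun t => (t - w i) ^ 2) '' Set.Icc (a i) (b i)) (r i))
    (v : Fin n → ℝ) (hv : ∀ i, v i = r i - (w i) ^ 2)
    (zbar : Fin n → ℝ) (hz01 : ∀ i, zbar i = 0 ∨ zbar i = 1)
    (hzfeas : ∑ i, zbar i ≤ (K : ℝ))
    (hzopt : ∀ z : Fin n → ℝ, (∀ i, z i = 0 ∨ z i = 1) → ∑ i, z i ≤ (K : ℝ) →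
      ∑ i, v i * zbar i ≤ ∑ i, v i * z i)
    (ybar : Fin n → ℝ)
    (hy : ∀ i, ybar i = zbar i * min (b i) (max (w i) (a i))) :
    ((Finset.univ.filter fun i => ybar i ≠ 0).card ≤ K ∧
      ∀ i, ybar i = 0 ∨ ybar i ∈ Set.Icc (a i) (b i)) ∧
    ∀ y : Fin n → ℝ,
      ((Finset.univ.filter fun i => y i ≠ 0).card ≤ K ∧
        ∀ i, y i = 0 ∨ y i ∈ Set.Icc (a i) (b i)) →
      ∑ i, (ybar i - w i) ^ 2 ≤ ∑ i, (y i - w i) ^ 2 := by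
  have hvc : ∀ i, v i = (min (b i) (max (w i) (a i)) - w i) ^ 2 - w i ^ 2 := fun i => by
    rw [hv i, (hr i).unique (isLeast_sq_sub_min_max (hab i).2 (w i))]
  refine ⟨⟨?_, fun i => ?_⟩, fun y ⟨hycard, hymem⟩ => ?_⟩
  · have hsupp : (univ.filter fun i => ybar i ≠ 0) ⊆ univ.filter fun i => zbar i ≠ 0 := by
      intro i
      simp only [mem_filter, mem_univ, true_and, hy i]
      exact left_ne_zero_of_mul
    have hzcard : #{i | zbar i ≠ 0} ≤ K := by
      exact_mod_cast (natCast_card_filter_ne_zero_eq_sum hz01).trans_le hzfeas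
    exact (card_le_card hsupp).trans hzcard
  · rcases hz01 i with h | h <;> simp [hy i, h, min_max_mem_Icc (hab i).2]
  · set z : Fin n → ℝ := fun i => if y i ≠ 0 then 1 else 0
    have hz : ∀ i, z i = 0 ∨ z i = 1 := fun i => by by_cases h : y i ≠ 0 <;> simp [z, h]
    have hzK : ∑ i, z i ≤ K := by simp only [z, sum_boole]; exact_mod_cast hycard
    calc ∑ i, (ybar i - w i) ^ 2 = ∑ i, w i ^ 2 + ∑ i, v i * zbar i := by
          rw [← sum_add_distrib]
          exact sum_congr rfl fun i _ => by rw [hy i, sq_mul_sub_eq_of_zero_or_one (hz01 i), hvc i]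
      _ ≤ ∑ i, w i ^ 2 + ∑ i, v i * z i := add_le_add_right (hzopt z hz hzK) _
      _ ≤ ∑ i, (y i - w i) ^ 2 := by
          rw [← sum_add_distrib]
          exact sum_le_sum fun i _ => hv i ▸ sq_add_mul_support_le (hr i).2 (hymem i)

theorem stmt5 (n K : ℕ) (hK1 : 1 ≤ K) (hKn : K ≤ n)
    (a b w r : Fin n → ℝ) (hab : ∀ i, 0 < a i ∧ a i ≤ b i)
    (hr : ∀ i, IsLeast ((fun t => (t - w i) ^ 2) '' Set.Icc (a i) (b i)) (r i))
    (v : Fin n → ℝ) (hv : ∀ i, v i = r i - (w i) ^ 2)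
    (zbar : Fin n → ℝ) (hz01 : ∀ i, zbar i = 0 ∨ zbar i = 1)
    (hzfeas : ∑ i, zbar i ≤ (K : ℝ))
    (hzopt : ∀ z : Fin n → ℝ, (∀ i, z i = 0 ∨ z i = 1) → ∑ i, z i ≤ (K : ℝ) →
      ∑ i, v i * zbar i ≤ ∑ i, v i * z i)
    (hzsign : ∀ i, zbar i = 1 → v i ≤ 0)
    (ybar : Fin n → ℝ)
    (hy : ∀ i, ybar i = zbar i * min (b i) (max (w i) (a i))) :
    ((Finset.univ.filter fun i => ybar i ≠ 0).card ≤ K ∧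
      ∀ i, ybar i = 0 ∨ ybar i ∈ Set.Icc (a i) (b i)) ∧
    ∀ y : Fin n → ℝ,
      ((Finset.univ.filter fun i => y i ≠ 0).card ≤ K ∧
        ∀ i, y i = 0 ∨ y i ∈ Set.Icc (a i) (b i)) →
      ∑ i, (ybar i - w i) ^ 2 ≤ ∑ i, (y i - w i) ^ 2 :=
  stmt5_general n K a b w r hab hr v hv zbar hz01 hzfeas hzopt ybar hy
end
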